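/- For real numbers a, b, c ≥ 0, the 3-dimensional Lebesgue measure of the polytope Δ₃(a,b,c) := {(u₁,u₂,u₃) ∈ ℝ³ : u₁, u₂, u₃ ≥ 0, u₁ ≤ a+b, u₃ ≤ c, u₂+u₃ ≤ b+c, u₁+u₂+u₃ ≤ a+b+c} equals c·(ab + b²/2) + (c²/2)·(a + b). -/

import Mathlib

/-!
In the coordinates `((u₁, u₃), u₂)` the polytope is the region between `0` and
`g(u₁, u₃) = min (b + c) (a + b + c - u₁) - u₃` over the rectangle `[0, a + b] × [0, c]`,
so its volume is the integral of `g` over that rectangle. By Fubini this is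
`c * ∫₀^{a+b} min (b + c) (a + b + c - u₁) du₁ - (a + b) c² / 2`, and the remaining integrand
is constant on `[0, a]` and affine on `[a, a + b]`.
-/

open MeasureTheory Set

theorem volume_preserving_fin_three_prod {α : Type*} [MeasureSpace α]
    [SigmaFinite (volume : Measure α)] :
    MeasurePreserving (fun u : Fin 3 → α => ((u 0, u 2), u 1)) :=
  Measure.measurePreserving_swap.comp
    (((MeasurePreserving.id volume).prod (volume_preserving_finTwoArrow α)).comp
      (volume_preserving_piFinSuccAbove (fun _ : Fin 3 => α) 1))

section RegionBetweenClosed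

variable {α : Type*} [MeasurableSpace α] {μ : Measure α} {f g : α → ℝ} {s : Set α}

theorem volume_region_between_cc_eq_lintegral [SFinite μ] (hf : Measurable f)
    (hg : Measurable g) (hs : MeasurableSet s) :
    μ.prod volume {p : α × ℝ | p.1 ∈ s ∧ p.2 ∈ Icc (f p.1) (g p.1)} =
      ∫⁻ x in s, ENNReal.ofReal ((g - f) x) ∂μ := by
  rw [Measure.prod_apply (measurableSet_region_between_cc hf hg hs), ← lintegral_indicator hs]
  congr 1 with x
  by_cases hx : x ∈ s
  · simp only [hx, indicator_of_mem, Pi.sub_apply, preimage_ofPred_eq, true_and]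
    exact Real.volume_Icc
  · simp [hx, Set.preimage]

theorem volume_region_between_cc_eq_integral [SigmaFinite μ] (hf : Measurable f)
    (hg : Measurable g) (hs : MeasurableSet s) (f_int : IntegrableOn f s μ)
    (g_int : IntegrableOn g s μ) (hfg : ∀ x ∈ s, f x ≤ g x) :
    μ.prod volume {p : α × ℝ | p.1 ∈ s ∧ p.2 ∈ Icc (f p.1) (g p.1)} =
      ENNReal.ofReal (∫ x in s, (g - f) x ∂μ) := by
  rw [volume_region_between_cc_eq_lintegral hf hg hs,
    ← volume_regionBetween_eq_lintegral' hf hg hs,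
    volume_regionBetween_eq_integral f_int g_int hs hfg]

end RegionBetweenClosed

theorem setIntegral_Icc_prod_Icc_sub_snd {m : ℝ → ℝ} (hm : Continuous m) {L c : ℝ}
    (hL : 0 ≤ L) (hc : 0 ≤ c) :
    ∫ p in Icc 0 L ×ˢ Icc 0 c, (m p.1 - p.2) = c * (∫ x in (0 : ℝ)..L, m x) - L * c ^ 2 / 2 := by
  have inner (K : ℝ) : ∫ y in (0 : ℝ)..c, K - y = c * K - c ^ 2 / 2 := by
    rw [intervalIntegral.integral_sub intervalIntegrable_const
      intervalIntegral.intervalIntegrable_id]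
    simp
  rw [Measure.volume_eq_prod, setIntegral_prod _
    ((by fun_prop : Continuous fun p : ℝ × ℝ => m p.1 - p.2).continuousOn.integrableOn_compact
      (isCompact_Icc.prod isCompact_Icc))]
  simp only [integral_Icc_eq_integral_Ioc, ← intervalIntegral.integral_of_le hc,
    ← intervalIntegral.integral_of_le hL, inner]
  rw [intervalIntegral.integral_sub ((hm.intervalIntegrable _ _).const_mul c)
    intervalIntegrable_const, intervalIntegral.integral_const_mul, intervalIntegral.integral_const,
    smul_eq_mul, sub_zero]
  ring

theorem integral_min_const_sub {a b : ℝ} (ha : 0 ≤ a) (hb : 0 ≤ b) (K : ℝ) :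
    ∫ x in (0 : ℝ)..a + b, min K (K + a - x) = (a + b) * K - b ^ 2 / 2 := by
  have hcont : Continuous fun x : ℝ => min K (K + a - x) := by fun_prop
  rw [← intervalIntegral.integral_add_adjacent_intervals (b := a)
    (hcont.intervalIntegrable _ _) (hcont.intervalIntegrable _ _)]
  have on_left : ∫ x in (0 : ℝ)..a, min K (K + a - x) = ∫ x in (0 : ℝ)..a, K := by
    refine intervalIntegral.integral_congr fun x hx => ?_
    rw [uIcc_of_le ha] at hx
    exact min_eq_left (by linarith [hx.2])
  have on_right : ∫ x in a..a + b, min K (K + a - x) = ∫ x in a..a + b, (K + a - x) := by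
    refine intervalIntegral.integral_congr fun x hx => ?_
    rw [uIcc_of_le (by linarith)] at hx
    exact min_eq_right (by linarith [hx.1])
  rw [on_left, on_right,
    intervalIntegral.integral_sub intervalIntegrable_const intervalIntegral.intervalIntegrable_id,
    intervalIntegral.integral_const, intervalIntegral.integral_const, integral_id, smul_eq_mul,
    smul_eq_mul]
  ring

theorem volume_Delta3 (a b c : ℝ) (ha : 0 ≤ a) (hb : 0 ≤ b) (hc : 0 ≤ c) :
    (volume {u : Fin 3 → ℝ | 0 ≤ u 0 ∧ 0 ≤ u 1 ∧ 0 ≤ u 2 ∧ u 0 ≤ a + b ∧ u 2 ≤ c ∧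
        u 1 + u 2 ≤ b + c ∧ u 0 + u 1 + u 2 ≤ a + b + c}).toReal =
      c * (a * b + b ^ 2 / 2) + c ^ 2 / 2 * (a + b) := by
  set s : Set (ℝ × ℝ) := Icc 0 (a + b) ×ˢ Icc 0 c
  set g : ℝ × ℝ → ℝ := fun p => min (b + c) (b + c + a - p.1) - p.2
  have hs : MeasurableSet s := measurableSet_Icc.prod measurableSet_Icc
  have hg : Continuous g := by fun_prop
  have hg_nonneg : ∀ p ∈ s, 0 ≤ g p := fun p ⟨⟨_, hx⟩, _, hz⟩ =>
    sub_nonneg.2 (le_min (by linarith) (by linarith))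
  have hset : {u : Fin 3 → ℝ | 0 ≤ u 0 ∧ 0 ≤ u 1 ∧ 0 ≤ u 2 ∧ u 0 ≤ a + b ∧ u 2 ≤ c ∧
      u 1 + u 2 ≤ b + c ∧ u 0 + u 1 + u 2 ≤ a + b + c} =
      (fun u : Fin 3 → ℝ => ((u 0, u 2), u 1)) ⁻¹'
        {p | p.1 ∈ s ∧ p.2 ∈ Icc ((0 : ℝ × ℝ → ℝ) p.1) (g p.1)} := by
    ext u
    simp only [s, g, mem_ofPred_eq, mem_preimage, mem_prod, mem_Icc, Pi.zero_apply,
      le_sub_iff_add_le, le_min_iff]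
    grind
  rw [hset, volume_preserving_fin_three_prod.measure_preimage
      (measurableSet_region_between_cc measurable_zero hg.measurable hs).nullMeasurableSet,
    Measure.volume_eq_prod, volume_region_between_cc_eq_integral measurable_zero hg.measurable hs
      integrableOn_zero (hg.continuousOn.integrableOn_compact (isCompact_Icc.prod isCompact_Icc))
      hg_nonneg]
  simp only [g, s, Pi.sub_apply, Pi.zero_apply, sub_zero]
  rw [setIntegral_Icc_prod_Icc_sub_snd (m := fun x => min (b + c) (b + c + a - x))
      (by fun_prop) (by positivity) hc, integral_min_const_sub ha hb (b + c)]
  convert ENNReal.toReal_ofReal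
    (by positivity : 0 ≤ c * (a * b + b ^ 2 / 2) + c ^ 2 / 2 * (a + b)) using 3
  ring
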